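/- For every integer n ≥ 1, the number of cyclic permutations of length n avoiding both cyclic patterns [1324] and [1342] equals 1 + C(n−1, 2); that is, #Av_n([1324],[1342]) = 1 + binom(n−1, 2). -/

import Mathlib

/-- A sequence `σ` of length `n` (with distinct values) contains the pattern `π`
of length `k` if some subsequence of `σ` is order isomorphic to `π`. -/
def ContainsPat {n k : ℕ} (σ : Fin n → Fin n) (π : Fin k → ℕ) : Prop :=
  ∃ f : Fin k → Fin n, StrictMono f ∧ ∀ i j : Fin k, π i < π j ↔ σ (f i) < σ (f j)

/-- The rotation of the sequence `σ` starting at position `r`. -/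
def rotSeq {n : ℕ} (σ : Fin n → Fin n) (r : Fin n) : Fin n → Fin n :=
  fun i => σ (i + r)

/-- The cyclic permutation `[σ]` contains the cyclic pattern `[π]` if some
rotation of `σ` contains `π` linearly. -/
def CycContains {n k : ℕ} (σ : Fin n → Fin n) (π : Fin k → ℕ) : Prop :=
  ∃ r : Fin n, ContainsPat (rotSeq σ r) π

/-- The cyclic permutation `[σ]` avoids the cyclic pattern `[π]`. -/
def CycAvoids {n k : ℕ} (σ : Fin n → Fin n) (π : Fin k → ℕ) : Prop :=
  ¬ CycContains σ π

/-- The cyclic permutation `[σ]`, i.e. the set of all rotations of `σ`. -/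
def CycClass {n : ℕ} (σ : Fin n → Fin n) : Set (Fin n → Fin n) :=
  Set.range (rotSeq σ)

/-- The set of cyclic permutations (rotation classes) of length `n` all of whose
representatives are permutations and which satisfy the (rotation-invariant)
predicate `P`. -/
def AvClasses (n : ℕ) (P : (Fin n → Fin n) → Prop) : Set (Set (Fin n → Fin n)) :=
  { C | ∃ σ : Equiv.Perm (Fin n), C = CycClass ⇑σ ∧ P ⇑σ }

/-- The cyclic descent number: the number of indices `i` (mod `n`) with
`σ i > σ (i+1)`. -/
def cdes {n : ℕ} (σ : Fin n → Fin n) : ℕ :=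
  (Finset.univ.filter fun i : Fin n =>
    σ ⟨(↑i + 1) % n, Nat.mod_lt _ i.pos⟩ < σ i).card

/-- The cyclic peak number: the number of indices `i` (mod `n`) with
`σ (i-1) < σ i > σ (i+1)`. -/
def cpk {n : ℕ} (σ : Fin n → Fin n) : ℕ :=
  (Finset.univ.filter fun i : Fin n =>
    σ ⟨(↑i + (n - 1)) % n, Nat.mod_lt _ i.pos⟩ < σ i ∧
    σ ⟨(↑i + 1) % n, Nat.mod_lt _ i.pos⟩ < σ i).card

/-!
Rotate each class so that its minimum `0` stands first. Then `[σ]` avoids `[1324]` and `[1342]`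
iff every entry of `σ` is the minimum or the maximum of the entries from it onwards and `σ` has
no `4132`: an entry violating the first property forms a `1324` or a `1342` with the leading
minimum, and conversely that property passes to patterns, and of the eight rotations of `1324`
and `1342` only `4132` has it. For such a `σ` and `i < j`, whether `σ j < σ i` depends only on
`i`; these positions `i` form an interval `[a, b)` with `1 ≤ a < b ≤ n - 1`, or none exist.
A permutation is determined by its inversions, so there is one class for each such interval,
plus the identity: `1 + C(n - 1, 2)` in all.
-/

open Finset

section Rotation

variable {n : ℕ}

lemma rotSeq_rotSeq (σ : Fin n → Fin n) (r s : Fin n) :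
    rotSeq (rotSeq σ r) s = rotSeq σ (s + r) := by
  funext i; simp [rotSeq, add_assoc]

lemma rotSeq_zero [NeZero n] (σ : Fin n → Fin n) : rotSeq σ 0 = σ := by
  funext i; simp [rotSeq]

variable [NeZero n]

lemma cycAvoids_rotSeq {k : ℕ} (σ : Fin n → Fin n) (r : Fin n) (π : Fin k → ℕ) :
    CycAvoids (rotSeq σ r) π ↔ CycAvoids σ π := by
  refine not_congr ⟨?_, ?_⟩
  · rintro ⟨s, h⟩
    exact ⟨s + r, by rwa [rotSeq_rotSeq] at h⟩
  · rintro ⟨s, h⟩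
    exact ⟨s - r, by rwa [rotSeq_rotSeq, sub_add_cancel]⟩

lemma cycClass_rotSeq (σ : Fin n → Fin n) (r : Fin n) :
    CycClass (rotSeq σ r) = CycClass σ := by
  ext τ
  constructor
  · rintro ⟨s, rfl⟩
    exact ⟨s + r, (rotSeq_rotSeq σ r s).symm⟩
  · rintro ⟨s, rfl⟩
    exact ⟨s - r, by rw [rotSeq_rotSeq, sub_add_cancel]⟩

/-- Every class has exactly one representative with `0` in position `0`. -/
theorem ncard_avClasses {P : (Fin n → Fin n) → Prop} (hP : ∀ σ r, P σ → P (rotSeq σ r)) :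
    (AvClasses n P).ncard = {σ : Fin n → Fin n | σ.Bijective ∧ σ 0 = 0 ∧ P σ}.ncard := by
  set S := {σ : Fin n → Fin n | σ.Bijective ∧ σ 0 = 0 ∧ P σ}
  have hAv : AvClasses n P = CycClass '' S := by
    ext C
    constructor
    · rintro ⟨σ, rfl, hσ⟩
      refine ⟨rotSeq σ (σ.symm 0), ⟨?_, ?_, hP _ _ hσ⟩, cycClass_rotSeq _ _⟩
      · exact σ.bijective.comp (Equiv.addRight _).bijective
      · simp [rotSeq]
    · rintro ⟨σ, ⟨hbij, -, hσ⟩, rfl⟩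
      exact ⟨Equiv.ofBijective σ hbij, rfl, hσ⟩
  have hinj : Set.InjOn CycClass S := by
    rintro σ ⟨hσ, hσ0, -⟩ τ ⟨-, hτ0, -⟩ hC
    obtain ⟨r, hr⟩ : τ ∈ CycClass σ := hC ▸ ⟨0, rotSeq_zero τ⟩
    have hr0 : r = 0 := hσ.1 (by simpa [hσ0, hτ0, rotSeq] using congrFun hr 0)
    rw [← hr, hr0, rotSeq_zero]
  rw [hAv, hinj.ncard_image]

end Rotation

section RotatedPatterns

lemma Fin.val_sub_eq_ite {n : ℕ} (a b : Fin n) :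
    ((a - b : Fin n) : ℕ) = if b ≤ a then (a : ℕ) - b else n + a - b := by
  split_ifs with h
  · exact Fin.coe_sub_iff_le.2 h
  · exact Fin.coe_sub_iff_lt.2 (not_le.1 h)

lemma Fin.val_lt_card_filter_iff {k : ℕ} {p : Fin k → Prop} [DecidablePred p]
    (hp : ∀ i j, i ≤ j → p j → p i) (i : Fin k) : (i : ℕ) < #{j | p j} ↔ p i := by
  constructor
  · intro hi
    by_contra hpi
    have hsub : ({j | p j} : Finset (Fin k)) ⊆ Iio i := fun j hj => by
      simp only [mem_filter, mem_univ, true_and] at hj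
      exact mem_Iio.2 (lt_of_not_ge fun hij => hpi (hp i j hij hj))
    exact absurd ((card_le_card hsub).trans_eq (Fin.card_Iio i)) (not_le.2 hi)
  · intro hpi
    have hsub : Iic i ⊆ ({j | p j} : Finset (Fin k)) := fun j hj => by
      simpa using hp j i (mem_Iic.1 hj) hpi
    have := (Fin.card_Iic i).symm.trans_le (card_le_card hsub)
    omega

variable {n k : ℕ} {σ : Fin n → Fin n} {π : Fin k → ℕ}

/-- Cutting the circle at position `0` turns a cyclic occurrence into a linear occurrence of a
rotation of the pattern. -/
theorem cycContains_iff_exists_containsPat_rotate [NeZero n] [NeZero k] :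
    CycContains σ π ↔ ∃ c : Fin k, ContainsPat σ fun i => π (i + c) := by
  constructor
  · rintro ⟨r, f, hf, hiso⟩
    have hfv : ∀ a b : Fin k, (f a : ℕ) < f b ↔ (a : ℕ) < b := fun a b => by
      rw [← Fin.lt_def, ← Fin.lt_def, hf.lt_iff_lt]
    -- positions that do not wrap around the end of the circle form an initial segment
    set c := #{i | (f i : ℕ) + r < n}
    have hc : ∀ i : Fin k, (i : ℕ) < c ↔ (f i : ℕ) + r < n :=
      Fin.val_lt_card_filter_iff fun i j hij hj => by
        rw [Fin.le_def] at hij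
        have := (hfv j i).1; omega
    have hck : c ≤ k := (card_le_univ _).trans_eq (Fintype.card_fin k)
    have hcmod : c % k = c ∧ c < k ∨ c % k = 0 ∧ c = k := by
      rcases hck.lt_or_eq with h | h
      · exact Or.inl ⟨Nat.mod_eq_of_lt h, h⟩
      · exact Or.inr ⟨h ▸ Nat.mod_self k, h⟩
    set c' := Fin.ofNat k c
    have hcv : (c' : ℕ) = c % k := Fin.val_ofNat k c
    refine ⟨c', fun i => f (i + c') + r, fun i j hij => ?_, fun i j => hiso _ _⟩
    rw [Fin.lt_def] at hij ⊢
    have := hfv (i + c') (j + c'); have := hfv (j + c') (i + c')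
    have := hc (i + c'); have := hc (j + c')
    simp only [Fin.val_add_eq_ite, hcv] at *
    split_ifs at * <;> omega
  · rintro ⟨c, g, hg, hiso⟩
    have hgv : ∀ a b : Fin k, (g a : ℕ) < g b ↔ (a : ℕ) < b := fun a b => by
      rw [← Fin.lt_def, ← Fin.lt_def, hg.lt_iff_lt]
    -- start the circle at `g (0 - c)`, the position of the entry playing `π 0`
    refine ⟨g (0 - c), fun i => g (i - c) - g (0 - c), fun i j hij => ?_, fun i j => ?_⟩
    · rw [Fin.lt_def] at hij ⊢
      have := hgv (i - c) (j - c); have := hgv (j - c) (i - c)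
      have := hgv (i - c) (0 - c); have := hgv (0 - c) (i - c)
      have := hgv (j - c) (0 - c); have := hgv (0 - c) (j - c)
      have := (g (i - c)).isLt; have := (g (j - c)).isLt
      simp only [Fin.val_sub_eq_ite, Fin.le_def, Fin.val_zero] at *
      split_ifs at * <;> omega
    · simpa [rotSeq, sub_add_cancel] using hiso (i - c) (j - c)

end RotatedPatterns

section SuffixExtremal

/-- Each entry is the minimum or the maximum of the entries from it onwards. -/
def SuffixExtremal {α : Type*} [LT α] {m : ℕ} (s : Fin m → α) : Prop :=
  ∀ i j l, i < j → i < l → ¬(s j < s i ∧ s i < s l)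

variable {n k : ℕ} {σ : Fin n → Fin n} {π : Fin k → ℕ}

lemma SuffixExtremal.of_containsPat (hσ : SuffixExtremal σ) (h : ContainsPat σ π) :
    SuffixExtremal π := by
  obtain ⟨f, hf, hiso⟩ := h
  rintro i j l hij hil ⟨hji, hil'⟩
  exact hσ _ _ _ (hf hij) (hf hil) ⟨(hiso j i).1 hji, (hiso i l).1 hil'⟩

lemma containsPat_of_lt {f : Fin k → Fin n} (hπ : π.Injective) (hf : StrictMono f)
    (h : ∀ a b, π a < π b → σ (f a) < σ (f b)) : ContainsPat σ π := by
  refine ⟨f, hf, fun a b => ⟨h a b, fun hab => ?_⟩⟩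
  rcases lt_trichotomy (π a) (π b) with hlt | heq | hgt
  · exact hlt
  · exact absurd hab (by rw [hπ heq]; exact lt_irrefl _)
  · exact absurd (h b a hgt) (not_lt.2 hab.le)

lemma cycContains_of_containsPat [NeZero n] (h : ContainsPat σ π) : CycContains σ π :=
  ⟨0, by rwa [rotSeq_zero]⟩

lemma rotate_1324_eq_4132 :
    (fun i : Fin 4 => (![1,3,2,4] : Fin 4 → ℕ) (i + 3)) = ![4,1,3,2] := by
  decide

lemma eq_three_of_suffixExtremal_rotate_1324 :
    ∀ c : Fin 4, SuffixExtremal (fun i => (![1,3,2,4] : Fin 4 → ℕ) (i + c)) → c = 3 := by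
  unfold SuffixExtremal; decide

lemma not_suffixExtremal_rotate_1342 :
    ∀ c : Fin 4, ¬SuffixExtremal (fun i => (![1,3,4,2] : Fin 4 → ℕ) (i + c)) := by
  unfold SuffixExtremal; decide

theorem SuffixExtremal.cycAvoids [NeZero n] (hσ : SuffixExtremal σ)
    (h : ¬ContainsPat σ ![4,1,3,2]) : CycAvoids σ ![1,3,2,4] ∧ CycAvoids σ ![1,3,4,2] := by
  constructor <;> intro hc <;> obtain ⟨c, hc⟩ := cycContains_iff_exists_containsPat_rotate.1 hc
  · obtain rfl := eq_three_of_suffixExtremal_rotate_1324 c (hσ.of_containsPat hc)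
    exact h (rotate_1324_eq_4132 ▸ hc)
  · exact not_suffixExtremal_rotate_1342 c (hσ.of_containsPat hc)

lemma not_containsPat_4132 [NeZero n] (h : CycAvoids σ ![1,3,2,4]) :
    ¬ContainsPat σ ![4,1,3,2] := fun h4132 =>
  h (cycContains_iff_exists_containsPat_rotate.2 ⟨3, rotate_1324_eq_4132 ▸ h4132⟩)

lemma strictMono_of_four {f : Fin 4 → Fin n} (h01 : f 0 < f 1) (h12 : f 1 < f 2)
    (h23 : f 2 < f 3) : StrictMono f :=
  Fin.strictMono_iff_lt_succ.2 fun i => by fin_cases i <;> assumption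

/-- With the minimum in front, an entry between a smaller and a larger later entry
completes a `1324` or a `1342`. -/
theorem suffixExtremal_of_cycAvoids [NeZero n] (hinj : σ.Injective) (h0 : σ 0 = 0)
    (h1 : CycAvoids σ ![1,3,2,4]) (h2 : CycAvoids σ ![1,3,4,2]) : SuffixExtremal σ := by
  rintro i j l hij hil ⟨hji, hil'⟩
  have hi : 0 < i := (Fin.zero_le i).lt_of_ne fun h => by
    rw [← h, h0] at hji; exact Fin.not_lt_zero _ hji
  have h0j : σ 0 < σ j := by
    rw [h0]
    exact (Fin.zero_le _).lt_of_ne fun h => (hi.trans hij).ne (hinj (h0.trans h))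
  rcases lt_trichotomy j l with hjl | rfl | hlj
  · refine h1 (cycContains_of_containsPat (containsPat_of_lt (f := ![0, i, j, l]) (by decide)
      (strictMono_of_four hi hij hjl) fun a b hab => ?_))
    fin_cases a <;> fin_cases b <;> simp at hab ⊢ <;> order
  · exact lt_asymm hji hil'
  · refine h2 (cycContains_of_containsPat (containsPat_of_lt (f := ![0, i, l, j]) (by decide)
      (strictMono_of_four hi hil hlj) fun a b hab => ?_))
    fin_cases a <;> fin_cases b <;> simp at hab ⊢ <;> order

end SuffixExtremal

section Inversions

variable {n : ℕ} {σ τ : Fin n → Fin n} {a b : ℕ}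

def StartsInversion (σ : Fin n → Fin n) (i : Fin n) : Prop :=
  ∃ j, i < j ∧ σ j < σ i

def IsInversionInterval (σ : Fin n → Fin n) (a b : ℕ) : Prop :=
  ∀ i j : Fin n, i < j → (σ j < σ i ↔ a ≤ (i : ℕ) ∧ (i : ℕ) < b)

lemma val_eq_card_filter_lt (hσ : σ.Bijective) (i : Fin n) :
    (σ i : ℕ) = #{j | σ j < σ i} := by
  rw [← Fin.card_Iio (σ i)]
  exact (card_bijective σ hσ fun j => by simp).symm

lemma eq_of_inversions_iff (hσ : σ.Bijective) (hτ : τ.Bijective)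
    (h : ∀ i j, i < j → (σ j < σ i ↔ τ j < τ i)) : σ = τ := by
  have hlt : ∀ i j, σ j < σ i ↔ τ j < τ i := by
    intro i j
    rcases lt_trichotomy i j with hij | rfl | hji
    · exact h i j hij
    · simp
    · rw [← not_iff_not, not_lt, not_lt, le_iff_lt_or_eq, le_iff_lt_or_eq, h j i hji,
        hσ.1.eq_iff, hτ.1.eq_iff]
  funext i
  apply Fin.ext
  simp only [val_eq_card_filter_lt hσ, val_eq_card_filter_lt hτ, hlt]

lemma IsInversionInterval.eq (hσ : σ.Bijective) (hτ : τ.Bijective)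
    (h : IsInversionInterval σ a b) (h' : IsInversionInterval τ a b) : σ = τ :=
  eq_of_inversions_iff hσ hτ fun i j hij => (h i j hij).trans (h' i j hij).symm

lemma IsInversionInterval.iff {a' b' : ℕ} (h : IsInversionInterval σ a b)
    (h' : IsInversionInterval σ a' b') {i : ℕ} (hi : i + 1 < n) :
    a ≤ i ∧ i < b ↔ a' ≤ i ∧ i < b' :=
  (h ⟨i, by omega⟩ ⟨n - 1, by omega⟩ (Fin.mk_lt_mk.2 (by omega))).symm.trans
    (h' ⟨i, by omega⟩ ⟨n - 1, by omega⟩ (Fin.mk_lt_mk.2 (by omega)))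

lemma IsInversionInterval.suffixExtremal (h : IsInversionInterval σ a b) : SuffixExtremal σ := by
  rintro i j l hij hil ⟨hji, hil'⟩
  exact lt_asymm hil' ((h i l hil).2 ((h i j hij).1 hji))

lemma IsInversionInterval.not_containsPat_4132 (h : IsInversionInterval σ a b) :
    ¬ContainsPat σ ![4,1,3,2] := by
  rintro ⟨f, hf, hiso⟩
  have h01 := hf (show (0 : Fin 4) < 1 by decide)
  have h12 := hf (show (1 : Fin 4) < 2 by decide)
  have h23 := hf (show (2 : Fin 4) < 3 by decide)
  have hf0 := (h _ _ h01).1 ((hiso 1 0).1 (by decide))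
  have hf2 := (h _ _ h23).1 ((hiso 3 2).1 (by decide))
  rw [Fin.lt_def] at h01 h12
  exact lt_asymm ((hiso 1 2).1 (by decide)) ((h _ _ h12).2 (by omega))

lemma isInversionInterval_id : IsInversionInterval (id : Fin n → Fin n) 0 0 :=
  fun _ _ hij => iff_of_false (not_lt.2 hij.le) (by omega)

lemma lt_of_not_startsInversion (hinj : σ.Injective) {i j : Fin n} (hi : ¬StartsInversion σ i)
    (hij : i < j) : σ i < σ j :=
  lt_of_le_of_ne (not_lt.1 fun h => hi ⟨j, hij, h⟩) (hinj.ne hij.ne)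

lemma SuffixExtremal.lt_iff_startsInversion (hσ : SuffixExtremal σ) (hinj : σ.Injective)
    {i j : Fin n} (hij : i < j) : σ j < σ i ↔ StartsInversion σ i :=
  ⟨fun h => ⟨j, hij, h⟩, fun ⟨l, hil, hl⟩ =>
    (lt_or_gt_of_ne (hinj.ne hij.ne')).resolve_right fun hgt => hσ i l j hil hij ⟨hl, hgt⟩⟩

/-- A gap `j` in the positions starting an inversion, between `i` and `l`, yields a `4132`
at `i, j, l` and a position after `l` that is smaller than `l`. -/
lemma SuffixExtremal.ordConnected_startsInversion (hσ : SuffixExtremal σ) (hinj : σ.Injective)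
    (h4132 : ¬ContainsPat σ ![4,1,3,2]) : {i | StartsInversion σ i}.OrdConnected := by
  refine ⟨fun i hi l hl j ⟨hij, hjl⟩ => ?_⟩
  by_contra hj
  have hij : i < j := hij.lt_of_ne (by rintro rfl; exact hj hi)
  have hjl : j < l := hjl.lt_of_ne (by rintro rfl; exact hj hl)
  obtain ⟨p, hlp, hp⟩ := hl
  have hli : σ l < σ i := (hσ.lt_iff_startsInversion hinj (hij.trans hjl)).2 hi
  have hjp : σ j < σ p := lt_of_not_startsInversion hinj hj (hjl.trans hlp)
  refine h4132 (containsPat_of_lt (f := ![i, j, l, p]) (by decide)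
    (strictMono_of_four hij hjl hlp) fun a b hab => ?_)
  fin_cases a <;> fin_cases b <;> simp at hab ⊢ <;> order

lemma SuffixExtremal.isInversionInterval (hσ : SuffixExtremal σ) (hinj : σ.Injective)
    (h : ∀ i : Fin n, StartsInversion σ i ↔ a ≤ (i : ℕ) ∧ (i : ℕ) < b) :
    IsInversionInterval σ a b :=
  fun _ _ hij => (hσ.lt_iff_startsInversion hinj hij).trans (h _)

lemma IsInversionInterval.cycAvoids [NeZero n] (h : IsInversionInterval σ a b) :
    CycAvoids σ ![1,3,2,4] ∧ CycAvoids σ ![1,3,4,2] :=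
  h.suffixExtremal.cycAvoids h.not_containsPat_4132

end Inversions

section TopRun

def topRun (n a b : ℕ) (i : Fin n) : Fin n :=
  if (i : ℕ) < a then i
  else if (i : ℕ) < b then ⟨n - 1 - (i - a), by omega⟩
  else ⟨i - (b - a), by omega⟩

variable {n a b : ℕ}

lemma topRun_val (i : Fin n) : (topRun n a b i : ℕ) =
    if (i : ℕ) < a then (i : ℕ)
    else if (i : ℕ) < b then n - 1 - (i - a)
    else i - (b - a) := by
  unfold topRun
  split_ifs <;> rfl

lemma topRun_bijective : (topRun n a b).Bijective := by
  refine Finite.injective_iff_bijective.1 fun i j h => Fin.ext ?_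
  have := congrArg Fin.val h
  rw [topRun_val, topRun_val] at this
  have := i.isLt; have := j.isLt
  split_ifs at * <;> omega

lemma isInversionInterval_topRun : IsInversionInterval (topRun n a b) a b := by
  intro i j hij
  rw [Fin.lt_def] at hij ⊢
  rw [topRun_val, topRun_val]
  have := j.isLt
  split_ifs <;> omega

lemma topRun_zero [NeZero n] (ha : 1 ≤ a) : topRun n a b 0 = 0 :=
  Fin.ext (by rw [topRun_val]; simp; omega)

def topRunParams (n : ℕ) : Finset (ℕ × ℕ) :=
  {p ∈ Icc 1 (n - 1) ×ˢ Icc 1 (n - 1) | p.1 < p.2}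

lemma mem_topRunParams {p : ℕ × ℕ} :
    p ∈ topRunParams n ↔ 1 ≤ p.1 ∧ p.1 < p.2 ∧ p.2 ≤ n - 1 := by
  simp only [topRunParams, mem_filter, mem_product, mem_Icc]
  omega

lemma card_topRunParams : #(topRunParams n) = (n - 1).choose 2 := by
  rw [topRunParams, card_product_filter_lt, Nat.card_Icc, Nat.add_sub_cancel]

lemma injOn_topRun : Set.InjOn (fun p : ℕ × ℕ => topRun n p.1 p.2) (topRunParams n) := by
  rintro ⟨a, b⟩ hab ⟨a', b'⟩ hab' h
  dsimp only at h
  rw [mem_coe, mem_topRunParams] at hab hab'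
  have h' := h ▸ (isInversionInterval_topRun (n := n) (a := a) (b := b))
  have := h'.iff isInversionInterval_topRun (i := a) (by omega)
  have := h'.iff isInversionInterval_topRun (i := a') (by omega)
  have := h'.iff isInversionInterval_topRun (i := b - 1) (by omega)
  have := h'.iff isInversionInterval_topRun (i := b' - 1) (by omega)
  rw [Prod.mk.injEq]
  omega

lemma id_notMem_image_topRun :
    id ∉ (fun p : ℕ × ℕ => topRun n p.1 p.2) '' topRunParams n := by
  rintro ⟨⟨a, b⟩, hab, h⟩
  dsimp only at h
  rw [mem_coe, mem_topRunParams] at hab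
  have := (h ▸ isInversionInterval_topRun).iff isInversionInterval_id (i := a) (by omega)
  omega

end TopRun

section Normalized

variable {n : ℕ} [NeZero n] {σ : Fin n → Fin n}

theorem eq_id_or_eq_topRun (hbij : σ.Bijective) (h0 : σ 0 = 0) (hσ : SuffixExtremal σ)
    (h4132 : ¬ContainsPat σ ![4,1,3,2]) :
    σ = id ∨ ∃ a b, 1 ≤ a ∧ a < b ∧ b ≤ n - 1 ∧ σ = topRun n a b := by
  set D := {i | StartsInversion σ i}
  rcases D.eq_empty_or_nonempty with hD | hD
  · refine Or.inl ((hσ.isInversionInterval hbij.1 fun i => ?_).eq hbij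
      Function.bijective_id isInversionInterval_id)
    exact iff_of_false (Set.eq_empty_iff_forall_notMem.1 hD i) (by omega)
  have hIcc := (hD.ordConnected_iff_of_bdd').1 (hσ.ordConnected_startsInversion hbij.1 h4132)
  set s := sInf D
  set t := sSup D
  have hmem : ∀ i, StartsInversion σ i ↔ s ≤ i ∧ i ≤ t := fun i => by
    rw [← Set.mem_Icc, ← hIcc]; rfl
  obtain ⟨x, hx⟩ := hD
  have hst : s ≤ t := ((hmem x).1 hx).1.trans ((hmem x).1 hx).2
  obtain ⟨p, htp, -⟩ := (hmem t).2 ⟨hst, le_rfl⟩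
  obtain ⟨j, -, hj⟩ := (hmem s).2 ⟨le_rfl, hst⟩
  have hs : s ≠ 0 := fun hs0 => by
    rw [hs0, h0] at hj
    exact Fin.not_lt_zero _ hj
  rw [Fin.le_def] at hst
  rw [Fin.lt_def] at htp
  refine Or.inr ⟨s, t + 1, ?_, by omega, by omega, (hσ.isInversionInterval hbij.1 fun i => ?_).eq
    hbij topRun_bijective isInversionInterval_topRun⟩
  · exact Nat.one_le_iff_ne_zero.2 (Fin.val_ne_zero_iff.2 hs)
  · rw [hmem, Fin.le_def, Fin.le_def]
    omega

theorem normalized_avoiders_eq :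
    {σ : Fin n → Fin n |
        σ.Bijective ∧ σ 0 = 0 ∧ CycAvoids σ ![1,3,2,4] ∧ CycAvoids σ ![1,3,4,2]} =
      insert id ((fun p : ℕ × ℕ => topRun n p.1 p.2) '' topRunParams n) := by
  ext σ
  constructor
  · rintro ⟨hbij, h0, h1, h2⟩
    rcases eq_id_or_eq_topRun hbij h0 (suffixExtremal_of_cycAvoids hbij.1 h0 h1 h2)
      (not_containsPat_4132 h1) with rfl | ⟨a, b, ha, hab, hb, rfl⟩
    · exact Set.mem_insert _ _
    · exact Set.mem_insert_of_mem _ ⟨(a, b), mem_topRunParams.2 ⟨ha, hab, hb⟩, rfl⟩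
  · rintro (rfl | ⟨⟨a, b⟩, hab, rfl⟩)
    · exact ⟨Function.bijective_id, rfl, isInversionInterval_id.cycAvoids⟩
    · rw [mem_coe, mem_topRunParams] at hab
      exact ⟨topRun_bijective, topRun_zero (by omega), isInversionInterval_topRun.cycAvoids⟩

end Normalized

theorem card_av_1324_1342 (n : ℕ) (hn : 1 ≤ n) :
    (AvClasses n fun σ => CycAvoids σ ![1,3,2,4] ∧ CycAvoids σ ![1,3,4,2]).ncard = 1 + Nat.choose (n - 1) 2 := by
  have : NeZero n := ⟨by omega⟩
  rw [ncard_avClasses fun σ r h =>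
      ⟨(cycAvoids_rotSeq σ r _).2 h.1, (cycAvoids_rotSeq σ r _).2 h.2⟩,
    normalized_avoiders_eq, Set.ncard_insert_of_notMem id_notMem_image_topRun,
    injOn_topRun.ncard_image, Set.ncard_coe_finset, card_topRunParams, add_comm]
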